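/- In ℂ² ⊗ ℂ², the three states |00⟩ + |11⟩, |00⟩ − |11⟩, |10⟩ + |01⟩ cannot be perfectly distinguished by any measurement whose operators are all of product form: there is no family of POVM elements {M_k = A_k ⊗ B_k with A_k, B_k positive semidefinite} summing to the identity such that each M_k has nonzero expectation in at most one of the three (normalized) states. -/

import Mathlib

open Kronecker Matrix
open scoped ComplexOrder

/-- The three (normalized) Bell states `(|00⟩+|11⟩)/√2`, `(|00⟩−|11⟩)/√2`,
`(|01⟩+|10⟩)/√2` in `ℂ² ⊗ ℂ²`, as vectors indexed by `Bool × Bool`. -/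
noncomputable def bell : Fin 3 → (Bool × Bool → ℂ) :=
  ![fun p => if p = (false, false) then (Real.sqrt 2 : ℂ)⁻¹
      else if p = (true, true) then (Real.sqrt 2 : ℂ)⁻¹ else 0,
    fun p => if p = (false, false) then (Real.sqrt 2 : ℂ)⁻¹
      else if p = (true, true) then -(Real.sqrt 2 : ℂ)⁻¹ else 0,
    fun p => if p = (false, true) then (Real.sqrt 2 : ℂ)⁻¹
      else if p = (true, false) then (Real.sqrt 2 : ℂ)⁻¹ else 0]

/-- Expectation value `⟨ψ|M|ψ⟩` of an operator `M` in the state `ψ`. -/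
noncomputable def expect (M : Matrix (Bool × Bool) (Bool × Bool) ℂ)
    (ψ : Bool × Bool → ℂ) : ℂ :=
  star ψ ⬝ᵥ M.mulVec ψ

lemma kron_psd {A B : Matrix Bool Bool ℂ} (hA : A.PosSemidef) (hB : B.PosSemidef) :
    (A ⊗ₖ B).PosSemidef := by
  exact hA.kronecker hB

lemma sqrt2_inv_ne : ((Real.sqrt 2 : ℂ))⁻¹ ≠ 0 := by
  apply inv_ne_zero
  have : Real.sqrt 2 ≠ 0 := by positivity
  exact_mod_cast Complex.ofReal_ne_zero.mpr this

lemma extract0 {A B : Matrix Bool Bool ℂ} (hv : (A ⊗ₖ B) *ᵥ bell 0 = 0) (x y : Bool) :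
    A x false * B y false + A x true * B y true = 0 := by
  have h := congrFun hv (x, y)
  simp only [Matrix.mulVec, dotProduct, Fintype.sum_prod_type, Fintype.sum_bool,
    Matrix.kroneckerMap_apply, bell, Matrix.cons_val_zero, Pi.zero_apply,
    Prod.mk.injEq, if_true, if_false, and_self, and_true, and_false, true_and, false_and,
    Bool.true_eq_false, Bool.false_eq_true, if_false, mul_zero, add_zero, zero_add] at h
  have h' : (A x false * B y false + A x true * B y true) * (Real.sqrt 2 : ℂ)⁻¹ = 0 := by
    linear_combination h
  exact (mul_eq_zero.mp h').resolve_right sqrt2_inv_ne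

lemma extract1 {A B : Matrix Bool Bool ℂ} (hv : (A ⊗ₖ B) *ᵥ bell 1 = 0) (x y : Bool) :
    A x false * B y false - A x true * B y true = 0 := by
  have h := congrFun hv (x, y)
  simp only [Matrix.mulVec, dotProduct, Fintype.sum_prod_type, Fintype.sum_bool,
    Matrix.kroneckerMap_apply, bell, Matrix.cons_val_one, Matrix.cons_val_zero, Matrix.head_cons, Pi.zero_apply,
    Prod.mk.injEq, if_true, if_false, and_self, and_true, and_false, true_and, false_and,
    Bool.true_eq_false, Bool.false_eq_true, if_false, mul_zero, add_zero, zero_add] at h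
  have h' : (A x false * B y false - A x true * B y true) * (Real.sqrt 2 : ℂ)⁻¹ = 0 := by
    linear_combination h
  exact (mul_eq_zero.mp h').resolve_right sqrt2_inv_ne

lemma extract2 {A B : Matrix Bool Bool ℂ} (hv : (A ⊗ₖ B) *ᵥ bell 2 = 0) (x y : Bool) :
    A x false * B y true + A x true * B y false = 0 := by
  have h := congrFun hv (x, y)
  simp only [Matrix.mulVec, dotProduct, Fintype.sum_prod_type, Fintype.sum_bool,
    Matrix.kroneckerMap_apply, bell, Matrix.cons_val_two, Matrix.tail_cons, Matrix.head_cons,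
    Pi.zero_apply,
    Prod.mk.injEq, if_true, if_false, and_self, and_true, and_false, true_and, false_and,
    Bool.true_eq_false, Bool.false_eq_true, if_false, mul_zero, add_zero, zero_add] at h
  have h' : (A x false * B y true + A x true * B y false) * (Real.sqrt 2 : ℂ)⁻¹ = 0 := by
    linear_combination h
  exact (mul_eq_zero.mp h').resolve_right sqrt2_inv_ne

/-- The common algebraic core for the two cases where the `ψ₃`-expectation vanishes
together with one of the `ψ₁`/`ψ₂`-expectations (`ε = ±1` distinguishes the two). -/
lemma caseAB {a c p r r' s : ℂ} (ε : ℂ) (hε : ε = 1 ∨ ε = -1)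
    (ha : star a = a) (hp : star p = p) (hs : star s = s) (hr : star r' = r)
    (e1 : a * p = ε * (c * r)) (e2 : a * r' = ε * (c * s))
    (e3 : a * r = -(c * p)) (e4 : a * s = -(c * r')) :
    c * r' = -(a * p) := by
  have hε2 : ε * ε = 1 := by rcases hε with h | h <;> simp [h]
  have hεs : star ε = ε := by rcases hε with h | h <;> simp [h]
  have hr2 : star r = r' := by rw [← hr, star_star]
  have key1 : (a ^ 2 + ε * c ^ 2) * (c * r') = 0 := by
    linear_combination (a * c) * e2 + (ε * c ^ 2) * e4
  have key2 : (a ^ 2 + ε * c ^ 2) * (a * p) = 0 := by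
    linear_combination a ^ 2 * e1 + (ε * a * c) * e3
  rcases eq_or_ne (a ^ 2 + ε * c ^ 2) 0 with hh | hh
  swap
  · have h1 := (mul_eq_zero.mp key1).resolve_left hh
    have h2 := (mul_eq_zero.mp key2).resolve_left hh
    rw [h1, h2]; ring
  rcases eq_or_ne a 0 with ha0 | ha0
  · have hc2 : ε * c ^ 2 = 0 := by rw [ha0] at hh; linear_combination hh
    have hεne : ε ≠ 0 := by rcases hε with h | h <;> simp [h]
    have hc : c = 0 := by
      have := (mul_eq_zero.mp hc2).resolve_left hεne
      exact pow_eq_zero_iff (by norm_num) |>.mp this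
    rw [ha0, hc]; ring
  · have f1 : ε * (star c * s) = -(c * p) := by
      have h' := congrArg star e2
      simp only [star_mul', ha, hs, hεs, hr] at h'
      linear_combination e3 - h'
    have f2 : ε * (c * s) = -(star c * p) := by
      have h' := congrArg star e3
      simp only [star_mul', star_neg, ha, hp, hr2] at h'
      linear_combination h' - e2
    have g1 : a ^ 2 * s = (c * star c) * p := by
      linear_combination s * hh - c * f2
    have g2 : (c * star c) * s = a ^ 2 * p := by
      linear_combination (ε * c) * f1 - p * hh - (c * star c * s) * hε2
    have g3 : (a ^ 2 * a ^ 2 - (c * star c) * (c * star c)) * s = 0 := by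
      linear_combination a ^ 2 * g1 - (c * star c) * g2
    have g4 : (a ^ 2 * a ^ 2 - (c * star c) * (c * star c)) * p = 0 := by
      linear_combination (c * star c) * g1 - a ^ 2 * g2
    rcases eq_or_ne (a ^ 2 * a ^ 2 - (c * star c) * (c * star c)) 0 with hz | hz
    · have hfac : (a ^ 2 - c * star c) * (a ^ 2 + c * star c) = 0 := by linear_combination hz
      rcases mul_eq_zero.mp hfac with h' | h'
      · have ha2 : a ^ 2 ≠ 0 := pow_ne_zero _ ha0
        have hsp : s = p := by
          have hmul : a ^ 2 * s = a ^ 2 * p := by linear_combination g2 + s * h'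
          exact mul_left_cancel₀ ha2 hmul
        linear_combination e4 - a * hsp
      · exfalso
        have haim : a.im = 0 := by
          rw [Complex.star_def, Complex.conj_eq_iff_im] at ha; exact ha
        have ha' : a = (a.re : ℂ) := Complex.ext rfl (by simp [haim])
        have ht' : c * star c = (Complex.normSq c : ℂ) := by
          rw [Complex.star_def, Complex.mul_conj]
        rw [ha', ht'] at h'
        have hre : (a.re ^ 2 + Complex.normSq c : ℝ) = 0 := by exact_mod_cast h'
        have : a.re = 0 := by nlinarith [Complex.normSq_nonneg c]
        exact ha0 (by rw [ha', this]; simp)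
    · have hs0 : s = 0 := (mul_eq_zero.mp g3).resolve_left hz
      have hp0 : p = 0 := (mul_eq_zero.mp g4).resolve_left hz
      have hcr : c * r' = 0 := by
        have := e4; rw [hs0] at this; linear_combination this
      rw [hcr, hp0]; ring

/-- The per-element key identity: if a product PSD operator `A ⊗ₖ B` has nonzero
expectation in at most one of the three Bell states, then
`A₀₁ B₁₀ = −A₀₀ B₀₀`. -/
lemma prod_op_key {A B : Matrix Bool Bool ℂ} (hA : A.PosSemidef) (hB : B.PosSemidef)
    (hdist : ∀ i j : Fin 3, expect (A ⊗ₖ B) (bell i) ≠ 0 →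
      expect (A ⊗ₖ B) (bell j) ≠ 0 → i = j) :
    A false true * B true false = -(A false false * B false false) := by
  have hM : (A ⊗ₖ B).PosSemidef := kron_psd hA hB
  have hz : ∀ i : Fin 3, expect (A ⊗ₖ B) (bell i) = 0 → (A ⊗ₖ B) *ᵥ bell i = 0 := by
    intro i hi
    exact (hM.dotProduct_mulVec_zero_iff (bell i)).mp hi
  have ha : star (A false false) = A false false := hA.1.apply _ _
  have hp : star (B false false) = B false false := hB.1.apply _ _
  have hs : star (B true true) = B true true := hB.1.apply _ _
  have hr : star (B true false) = B false true := hB.1.apply _ _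
  by_cases h0 : expect (A ⊗ₖ B) (bell 0) = 0 <;>
    by_cases h1 : expect (A ⊗ₖ B) (bell 1) = 0
  · -- Case C : expectations in ψ₁ and ψ₂ vanish
    have q0 := extract0 (hz 0 h0)
    have q1 := extract1 (hz 1 h1)
    have hcol : ∀ x y : Bool, A x false * B y false = 0 := by
      intro x y
      have := q0 x y
      have := q1 x y
      have h2 : (2 : ℂ) * (A x false * B y false) = 0 := by
        linear_combination q0 x y + q1 x y
      have := (mul_eq_zero.mp h2).resolve_left (by norm_num)
      exact this
    have hc' : A true false * B true false = 0 := hcol true true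
    have hap : A false false * B false false = 0 := hcol false false
    rcases mul_eq_zero.mp hc' with h' | h'
    · have : A false true = 0 := by rw [← hA.1.apply, h', star_zero]
      rw [this, hap]; ring
    · rw [h', hap]; ring
  · -- ψ₁ and ψ₃ expectations vanish (ε = -1)
    have h2 : expect (A ⊗ₖ B) (bell 2) = 0 := by
      by_contra h2
      exact absurd (hdist 1 2 h1 h2) (by decide)
    have q0 := extract0 (hz 0 h0)
    have q2 := extract2 (hz 2 h2)
    refine caseAB (-1) (Or.inr rfl) ha hp hs hr ?_ ?_ ?_ ?_
    · linear_combination q0 false false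
    · linear_combination q0 false true
    · linear_combination q2 false false
    · linear_combination q2 false true
  · -- ψ₂ and ψ₃ expectations vanish (ε = 1)
    have h2 : expect (A ⊗ₖ B) (bell 2) = 0 := by
      by_contra h2
      exact absurd (hdist 0 2 h0 h2) (by decide)
    have q1 := extract1 (hz 1 h1)
    have q2 := extract2 (hz 2 h2)
    refine caseAB 1 (Or.inl rfl) ha hp hs hr ?_ ?_ ?_ ?_
    · linear_combination q1 false false
    · linear_combination q1 false true
    · linear_combination q2 false false
    · linear_combination q2 false true
  · exact absurd (hdist 0 1 h0 h1) (by decide)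

/-- No separable POVM (finite family of product positive-semidefinite
operators `A_k ⊗ B_k` summing to the identity) perfectly distinguishes the
three Bell states: there is no such family in which each element has nonzero
expectation in at most one of the three states. -/
theorem bell_states_not_separably_distinguishable :
    ¬ ∃ (K : ℕ) (A B : Fin K → Matrix Bool Bool ℂ),
      (∀ k, (A k).PosSemidef ∧ (B k).PosSemidef) ∧
      (∑ k, A k ⊗ₖ B k) = 1 ∧
      (∀ k, ∀ i j : Fin 3,
        expect (A k ⊗ₖ B k) (bell i) ≠ 0 →
        expect (A k ⊗ₖ B k) (bell j) ≠ 0 → i = j) := by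
  rintro ⟨K, A, B, hpos, hsum, hdist⟩
  have hkey : ∀ k, A k false true * B k true false
      = -(A k false false * B k false false) :=
    fun k => prod_op_key (hpos k).1 (hpos k).2 (hdist k)
  have h1 : ∑ k, A k false false * B k false false = 1 := by
    have h := congrFun (congrFun hsum (false, false)) (false, false)
    simpa [Matrix.sum_apply, Matrix.one_apply] using h
  have h2 : ∑ k, A k false true * B k true false = 0 := by
    have h := congrFun (congrFun hsum (false, true)) (true, false)
    simpa [Matrix.sum_apply, Matrix.one_apply] using h
  rw [Finset.sum_congr rfl (fun k _ => hkey k), Finset.sum_neg_distrib, h1] at h2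
  norm_num at h2
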